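/- Let the nodes c_1,…,c_s be pairwise distinct and symmetric with parameter ζ ∈ ℝ, i.e. Πc = ζ·1 − c. Then the differentiation matrix E = V_sẼ_sV_s^{−1} satisfies Π E Π = −E. -/

import Mathlib

/-!
`E = V Ẽ V⁻¹` sends the vector of values of a polynomial `p` of degree `< s` at the nodes to the
values of `p'`, and by interpolation every vector is such a value vector. Symmetry of the nodes
means that `Π` sends the values of `p` to those of `p(ζ - x)`, whose derivative is `-p'(ζ - x)`.
Hence `E Π = -Π E`, and `Π² = 1` gives `Π E Π = -E`.
-/

open Matrix

/-- The Vandermonde matrix `V_q(c) ∈ ℝ^{s×q}` with entries `c_i^{j-1}`. -/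
noncomputable def vand {s : ℕ} (c : Fin s → ℝ) (q : ℕ) : Matrix (Fin s) (Fin q) ℝ :=
  Matrix.of fun i j => c i ^ (j : ℕ)

/-- The nilpotent matrix `Ẽ_q` whose only nonzero entries are `(Ẽ_q)_{i,i+1} = i`. -/
noncomputable def etil (q : ℕ) : Matrix (Fin q) (Fin q) ℝ :=
  Matrix.of fun i j => if (j : ℕ) = (i : ℕ) + 1 then ((i : ℕ) + 1 : ℝ) else 0

/-- The flip permutation matrix `Π ∈ ℝ^{s×s}`, with `Π_{ij} = 1` iff `j = s+1-i`. -/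
noncomputable def flipPerm (s : ℕ) : Matrix (Fin s) (Fin s) ℝ :=
  Matrix.of fun i j => if (i : ℕ) + (j : ℕ) = s - 1 then 1 else 0

open Polynomial

noncomputable def diffMatrix {s : ℕ} (c : Fin s → ℝ) : Matrix (Fin s) (Fin s) ℝ :=
  vand c s * etil s * (vand c s)⁻¹

section Flip

variable {s : ℕ}

lemma flipPerm_mulVec (v : Fin s → ℝ) : flipPerm s *ᵥ v = fun i => v i.rev := by
  ext i
  have hrev (j : Fin s) : (i : ℕ) + j = s - 1 ↔ j = i.rev := by
    rw [Fin.ext_iff, Fin.val_rev]; omega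
  simp [flipPerm, mulVec, dotProduct, hrev]

lemma flipPerm_mul_flipPerm : flipPerm s * flipPerm s = 1 :=
  ext_iff_mulVec.2 fun v => by simp [← mulVec_mulVec, flipPerm_mulVec]

lemma flipPerm_mulVec_eval {c : Fin s → ℝ} {ζ : ℝ} (hsym : flipPerm s *ᵥ c = fun i => ζ - c i)
    (p : ℝ[X]) :
    flipPerm s *ᵥ (fun i => p.eval (c i)) = fun i => (p.comp (C ζ - X)).eval (c i) := by
  ext i
  have hci : c i.rev = ζ - c i := by simpa [flipPerm_mulVec] using congrFun hsym i
  simp [flipPerm_mulVec, hci]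

end Flip

lemma degree_comp_C_sub_X {R : Type*} [Ring R] [NoZeroDivisors R] [Nontrivial R] (p : R[X])
    (ζ : R) : (p.comp (C ζ - X)).degree = p.degree := by
  have h : (C ζ - X).degree = 1 := by
    rw [← neg_sub, degree_neg, degree_X_sub_C]
  rw [degree_comp (by rw [h]; exact zero_lt_one), h, mul_one]

section Vandermonde

variable {s : ℕ} {p : ℝ[X]}

lemma vand_mulVec_coeff (c : Fin s → ℝ) (hp : p.degree < s) :
    vand c s *ᵥ (fun k : Fin s => p.coeff k) = fun i => p.eval (c i) := by
  ext i
  rw [eval_eq_sum_degreeLTEquiv (mem_degreeLT.2 hp)]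
  simp [vand, mulVec, dotProduct, degreeLTEquiv, mul_comm]

lemma etil_mulVec_coeff (hp : p.degree < s) :
    etil s *ᵥ (fun k : Fin s => p.coeff k) = fun k : Fin s => (derivative p).coeff k := by
  ext k
  have hsum : (etil s *ᵥ fun k : Fin s => p.coeff k) k
      = ∑ j ∈ Finset.range s, if (k : ℕ) + 1 = j then ((k : ℕ) + 1) * p.coeff j else 0 := by
    rw [← Fin.sum_univ_eq_sum_range (fun j => if (k : ℕ) + 1 = j then _ else 0)]
    simp [etil, mulVec, dotProduct, eq_comm]
  rw [hsum, Finset.sum_ite_eq, coeff_derivative, mul_comm]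
  split_ifs with hk
  · rfl
  · rw [coeff_eq_zero_of_degree_lt (hp.trans_le (by simp at hk; exact_mod_cast hk)), zero_mul]

lemma diffMatrix_mulVec_eval {c : Fin s → ℝ} (hc : Function.Injective c) (hp : p.degree < s) :
    diffMatrix c *ᵥ (fun i => p.eval (c i)) = fun i => (derivative p).eval (c i) := by
  have hV : IsUnit (vand c s).det :=
    isUnit_iff_ne_zero.2 (det_vandermonde_ne_zero_iff.2 hc)
  rw [diffMatrix, ← vand_mulVec_coeff c hp, mulVec_mulVec, mul_assoc, nonsing_inv_mul _ hV,
    mul_one, ← mulVec_mulVec, etil_mulVec_coeff hp,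
    vand_mulVec_coeff c (degree_derivative_le.trans_lt hp)]

lemma exists_degree_lt_eval_eq {c : Fin s → ℝ} (hc : Function.Injective c) (v : Fin s → ℝ) :
    ∃ p : ℝ[X], p.degree < s ∧ (fun i => p.eval (c i)) = v := by
  refine ⟨Lagrange.interpolate Finset.univ c v, ?_, ?_⟩
  · simpa using Lagrange.degree_interpolate_lt (s := Finset.univ) v hc.injOn
  · ext i
    exact Lagrange.eval_interpolate_at_node v hc.injOn (Finset.mem_univ i)

end Vandermonde

theorem diffMatrix_mul_flipPerm {s : ℕ} {c : Fin s → ℝ} (hc : Function.Injective c) {ζ : ℝ}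
    (hsym : flipPerm s *ᵥ c = fun i => ζ - c i) :
    diffMatrix c * flipPerm s = -(flipPerm s * diffMatrix c) := by
  refine ext_iff_mulVec.2 fun v => ?_
  obtain ⟨p, hp, rfl⟩ := exists_degree_lt_eval_eq hc v
  have hp' : (p.comp (C ζ - X)).degree < s := by rwa [degree_comp_C_sub_X]
  rw [← mulVec_mulVec, neg_mulVec, ← mulVec_mulVec, flipPerm_mulVec_eval hsym,
    diffMatrix_mulVec_eval hc hp', diffMatrix_mulVec_eval hc hp, flipPerm_mulVec_eval hsym,
    derivative_comp]
  ext i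
  simp

/-- for pairwise distinct nodes that are symmetric with parameter `ζ`
(`Πc = ζ·1 - c`), the differentiation matrix `E = V_s Ẽ_s V_s⁻¹` satisfies
`Π E Π = -E`. -/
theorem stmt11 (s : ℕ) (c : Fin s → ℝ) (hc : Function.Injective c) (ζ : ℝ)
    (hsym : flipPerm s *ᵥ c = fun i => ζ - c i) :
    flipPerm s * (vand c s * etil s * (vand c s)⁻¹) * flipPerm s
      = -(vand c s * etil s * (vand c s)⁻¹) := by
  change flipPerm s * diffMatrix c * flipPerm s = -diffMatrix c
  rw [mul_assoc, diffMatrix_mul_flipPerm hc hsym, mul_neg, ← mul_assoc, flipPerm_mul_flipPerm,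
    one_mul]
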